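/- If a set function f on finite subsets of a ground set is monotone nondecreasing and submodular with f(∅) = 0, then the greedy algorithm that iteratively adds the element with maximum marginal gain produces, after k steps, a set S_k with f(S_k) ≥ (1 − (1 − 1/k)^k) · max_{|S| ≤ k} f(S) ≥ (1 − 1/e) · max_{|S| ≤ k} f(S). -/
import Mathlib

private lemma sum_marg {U : Type*} [DecidableEq U] (f : Finset U → ℝ)
    (hmono : ∀ A B : Finset U, A ⊆ B → f A ≤ f B)
    (hsub : ∀ A B : Finset U, A ⊆ B → ∀ x ∉ B,
      f (insert x A) - f A ≥ f (insert x B) - f B)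
    (A T : Finset U) :
    f (A ∪ T) - f A ≤ ∑ x ∈ T, (f (insert x A) - f A) := by
  classical
  induction T using Finset.induction_on with
  | empty => simp
  | @insert y T' hy ih =>
    rw [Finset.sum_insert hy, Finset.union_insert]
    have h1 : f (insert y (A ∪ T')) - f (A ∪ T') ≤ f (insert y A) - f A := by
      by_cases hyA : y ∈ A ∪ T'
      · rw [Finset.insert_eq_self.mpr hyA]
        have := hmono A (insert y A) (Finset.subset_insert _ _)
        linarith
      · exact hsub A (A ∪ T') Finset.subset_union_left y hyA
    linarith

theorem greedy_submodular_guarantee {U : Type*} [Fintype U] [DecidableEq U]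
    (f : Finset U → ℝ)
    (hmono : ∀ A B : Finset U, A ⊆ B → f A ≤ f B)
    (hsub : ∀ A B : Finset U, A ⊆ B → ∀ x ∉ B,
      f (insert x A) - f A ≥ f (insert x B) - f B)
    (hempty : f ∅ = 0)
    (S : ℕ → Finset U) (hS0 : S 0 = ∅)
    (hstep : ∀ i, ∃ x : U, S (i + 1) = insert x (S i) ∧
      ∀ y : U, f (insert y (S i)) - f (S i) ≤ f (insert x (S i)) - f (S i))
    (k : ℕ) (T : Finset U) (hT : T.card ≤ k) :
    f (S k) ≥ (1 - (1 - 1 / (k : ℝ)) ^ k) * f T ∧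
    f (S k) ≥ (1 - 1 / Real.exp 1) * f T := by
  classical
  have hT0 : 0 ≤ f T := by
    have := hmono ∅ T (Finset.empty_subset T); linarith [hempty ▸ this]
  rcases Nat.eq_zero_or_pos k with hk | hk
  · subst hk
    have hTe : T = ∅ := Finset.card_eq_zero.mp (Nat.le_zero.mp hT)
    subst hTe
    rw [hS0, hempty]
    constructor <;> simp
  · have hkpos : (0:ℝ) < k := by exact_mod_cast hk
    have hkR : (1:ℝ) ≤ k := by exact_mod_cast hk
    have hq : (0:ℝ) ≤ 1 - 1/(k:ℝ) := by
      rw [sub_nonneg, div_le_one hkpos]; linarith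
    have key : ∀ i, f T - f (S (i+1)) ≤ (1 - 1/(k:ℝ)) * (f T - f (S i)) := by
      intro i
      obtain ⟨x, hx, hxmax⟩ := hstep i
      have hdelta0 : 0 ≤ f (S (i+1)) - f (S i) := by
        rw [hx]
        have := hmono (S i) (insert x (S i)) (Finset.subset_insert _ _); linarith
      have hbound : f T - f (S i) ≤ (k:ℝ) * (f (S (i+1)) - f (S i)) := by
        have h1 : f T ≤ f (S i ∪ T) := hmono T _ Finset.subset_union_right
        have h2 := sum_marg f hmono hsub (S i) T
        have h3 : ∑ y ∈ T, (f (insert y (S i)) - f (S i)) ≤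
            ∑ _y ∈ T, (f (S (i+1)) - f (S i)) := by
          apply Finset.sum_le_sum
          intro y _
          rw [hx]; exact hxmax y
        rw [Finset.sum_const, nsmul_eq_mul] at h3
        have h4 : (T.card : ℝ) * (f (S (i+1)) - f (S i)) ≤
            (k:ℝ) * (f (S (i+1)) - f (S i)) := by
          apply mul_le_mul_of_nonneg_right _ hdelta0
          exact_mod_cast hT
        linarith
      have hdiv : (f T - f (S i)) / (k:ℝ) ≤ f (S (i+1)) - f (S i) := by
        rw [div_le_iff₀ hkpos]; linarith
      have hexp : (1 - 1/(k:ℝ)) * (f T - f (S i))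
          = (f T - f (S i)) - (f T - f (S i)) / (k:ℝ) := by ring
      linarith
    have main : ∀ i, f T - f (S i) ≤ (1 - 1/(k:ℝ))^i * f T := by
      intro i
      induction i with
      | zero => rw [hS0, hempty]; simp
      | succ n ih =>
        calc f T - f (S (n+1)) ≤ (1 - 1/(k:ℝ)) * (f T - f (S n)) := key n
          _ ≤ (1 - 1/(k:ℝ)) * ((1 - 1/(k:ℝ))^n * f T) :=
              mul_le_mul_of_nonneg_left ih hq
          _ = (1 - 1/(k:ℝ))^(n+1) * f T := by ring
    have first : f (S k) ≥ (1 - (1 - 1 / (k : ℝ)) ^ k) * f T := by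
      have := main k
      have hr : (1 - (1 - 1/(k:ℝ))^k) * f T = f T - (1 - 1/(k:ℝ))^k * f T := by ring
      linarith
    refine ⟨first, ?_⟩
    have hqk : (1 - 1/(k:ℝ))^k ≤ 1 / Real.exp 1 := by
      have h1 : 1 - 1/(k:ℝ) ≤ Real.exp (-(1/(k:ℝ))) := by
        have := Real.add_one_le_exp (-(1/(k:ℝ))); linarith
      have h2 : (1 - 1/(k:ℝ))^k ≤ (Real.exp (-(1/(k:ℝ))))^k :=
        pow_le_pow_left₀ hq h1 k
      have h3 : (Real.exp (-(1/(k:ℝ))))^k = Real.exp ((k:ℝ) * (-(1/(k:ℝ)))) :=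
        (Real.exp_nat_mul _ k).symm
      have h4 : (k:ℝ) * (-(1/(k:ℝ))) = -1 := by
        field_simp
      rw [h3, h4, Real.exp_neg, ← one_div] at h2
      exact h2
    have : (1 - 1 / Real.exp 1) * f T ≤ (1 - (1 - 1/(k:ℝ))^k) * f T := by
      apply mul_le_mul_of_nonneg_right _ hT0
      linarith
    linarith
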